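/- Let μ be the probability measure on [0,1]^d with density c (the extended FGM copula density with parameters λ^(k)_M satisfying the admissibility constraint), and let (U₁,…,U_d) ∼ μ. Then for every z ∈ {1,2} and every P ⊆ {1,…,d} with |P| ≥ 2, E[∏_{s ∈ P} φ_z(U_s)] = λ^(z)_P. -/

import Mathlib

/-! φ₁ and φ₂ have mean zero and are orthonormal in L²[0, 1]. Hence, under the uniform measure
on the cube, `∫ (∏_{m ∈ M} φ_k(u_m)) (∏_{s ∈ P} φ_z(u_s))` factorises over coordinates and vanishes
unless `M = P` (a coordinate lying in only one of `M`, `P` contributes a factor `∫ φ = 0`), and then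
equals `δ_{kz}^{|P|}`. Expanding the density, only the term `λ^(z)_P` survives. Admissibility makes
`c` nonnegative on the cube, so the `ENNReal.ofReal` in `fgmMeasure` does not truncate it. -/
open MeasureTheory ProbabilityTheory Real Finset

/-- The shifted Legendre-type functions: `φ₁(x) = √3 (2x − 1)` and
`φ₂(x) = √5 (6x² − 6x + 1)`. -/
noncomputable def phiFGM (k : ℕ) (x : ℝ) : ℝ :=
  if k = 1 then Real.sqrt 3 * (2 * x - 1) else Real.sqrt 5 * (6 * x ^ 2 - 6 * x + 1)

/-- Antiderivatives: `Φ₁(x) = √3 (x² − x)` and `Φ₂(x) = √5 (2x³ − 3x² + x)`. -/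
noncomputable def PhiFGM (k : ℕ) (x : ℝ) : ℝ :=
  if k = 1 then Real.sqrt 3 * (x ^ 2 - x) else Real.sqrt 5 * (2 * x ^ 3 - 3 * x ^ 2 + x)

/-- The density of the extended `d`-variate FGM copula with parameters `lam k M`:
`c(u) = 1 + ∑_{k=1}^2 ∑_{M ⊆ {1,…,d}, |M| ≥ 2} λ^(k)_M ∏_{m ∈ M} φ_k(u_m)`. -/
noncomputable def fgmDensity (d : ℕ) (lam : ℕ → Finset (Fin d) → ℝ) (u : Fin d → ℝ) : ℝ :=
  1 + ∑ k ∈ Finset.Icc 1 2, ∑ M ∈ Finset.univ.powerset.filter (fun M : Finset (Fin d) => 2 ≤ M.card),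
      lam k M * ∏ m ∈ M, phiFGM k (u m)

/-- The admissibility constraint
`∑_{j=2}^d [ (√3)^j ∑_{|M|=j} |λ^(1)_M| + (√5)^j ∑_{|M|=j} |λ^(2)_M| ] ≤ 1`. -/
def fgmAdmissible (d : ℕ) (lam : ℕ → Finset (Fin d) → ℝ) : Prop :=
  ∑ M ∈ Finset.univ.powerset.filter (fun M : Finset (Fin d) => 2 ≤ M.card),
      (Real.sqrt 3 ^ M.card * |lam 1 M| + Real.sqrt 5 ^ M.card * |lam 2 M|) ≤ 1

/-- The probability measure on `[0,1]^d` with density `c`: the uniform measure on the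
unit cube reweighted by the extended FGM copula density. -/
noncomputable def fgmMeasure (d : ℕ) (lam : ℕ → Finset (Fin d) → ℝ) :
    Measure (Fin d → ℝ) :=
  (Measure.pi fun _ : Fin d => volume.restrict (Set.Icc (0:ℝ) 1)).withDensity
    fun u => ENNReal.ofReal (fgmDensity d lam u)

instance isProbabilityMeasure_volume_restrict_Icc_zero_one :
    IsProbabilityMeasure (volume.restrict (Set.Icc (0:ℝ) 1)) :=
  ⟨by simp⟩

theorem pi_volume_restrict_Icc {ι : Type*} [Fintype ι] (a b : ℝ) :
    Measure.pi (fun _ : ι => volume.restrict (Set.Icc a b)) =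
      volume.restrict (Set.Icc (fun _ => a) (fun _ => b)) := by
  rw [← Set.pi_univ_Icc, volume_pi, Measure.restrict_pi_pi]

theorem integrable_pi_volume_restrict_Icc {ι : Type*} [Fintype ι] {a b : ℝ}
    {f : (ι → ℝ) → ℝ} (hf : Continuous f) :
    Integrable f (Measure.pi fun _ : ι => volume.restrict (Set.Icc a b)) := by
  rw [pi_volume_restrict_Icc]
  exact hf.integrableOn_Icc

theorem ae_mem_Icc_pi_volume_restrict_Icc {ι : Type*} [Fintype ι] (a b : ℝ) :
    ∀ᵐ u ∂(Measure.pi fun _ : ι => volume.restrict (Set.Icc a b)), ∀ i, u i ∈ Set.Icc a b := by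
  rw [pi_volume_restrict_Icc]
  filter_upwards [ae_restrict_mem measurableSet_Icc] with u hu i using ⟨hu.1 i, hu.2 i⟩

theorem integral_Icc_zero_one_of_eq_quartic {f : ℝ → ℝ} (a b c e g : ℝ)
    (hf : ∀ x, f x = a * x ^ 4 + b * x ^ 3 + c * x ^ 2 + e * x + g) :
    ∫ x in Set.Icc (0:ℝ) 1, f x = a / 5 + b / 4 + c / 3 + e / 2 + g := by
  have hderiv : ∀ x ∈ Set.uIcc (0:ℝ) 1, HasDerivAt
      (fun y => a * y ^ 5 / 5 + b * y ^ 4 / 4 + c * y ^ 3 / 3 + e * y ^ 2 / 2 + g * y) (f x) x := by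
    intro x _
    rw [hf]
    exact (((((((hasDerivAt_pow 5 x).const_mul a).div_const 5).add
      (((hasDerivAt_pow 4 x).const_mul b).div_const 4)).add
      (((hasDerivAt_pow 3 x).const_mul c).div_const 3)).add
      (((hasDerivAt_pow 2 x).const_mul e).div_const 2)).add
      ((hasDerivAt_id x).const_mul g)).congr_deriv (by push_cast; ring)
  have hcont : Continuous f := by
    rw [show f = _ from funext hf]; fun_prop
  rw [integral_Icc_eq_integral_Ioc, ← intervalIntegral.integral_of_le zero_le_one,
    intervalIntegral.integral_eq_sub_of_hasDerivAt hderiv (hcont.intervalIntegrable _ _)]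
  norm_num

@[fun_prop]
theorem continuous_phiFGM (k : ℕ) : Continuous (phiFGM k) := by
  unfold phiFGM; split <;> fun_prop

theorem integral_phiFGM (k : ℕ) : ∫ x in Set.Icc (0:ℝ) 1, phiFGM k x = 0 := by
  by_cases hk : k = 1
  · rw [integral_Icc_zero_one_of_eq_quartic 0 0 0 (2 * √3) (-√3)
      fun x => by simp only [phiFGM, hk, if_true]; ring]
    ring
  · rw [integral_Icc_zero_one_of_eq_quartic 0 0 (6 * √5) (-6 * √5) √5
      fun x => by simp only [phiFGM, hk, if_false]; ring]
    ring

theorem integral_phiFGM_mul_phiFGM {k l : ℕ} (hk : k = 1 ∨ k = 2) (hl : l = 1 ∨ l = 2) :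
    ∫ x in Set.Icc (0:ℝ) 1, phiFGM k x * phiFGM l x = if k = l then 1 else 0 := by
  have h3 : √3 * √3 = 3 := Real.mul_self_sqrt (by norm_num)
  have h5 : √5 * √5 = 5 := Real.mul_self_sqrt (by norm_num)
  rcases hk with rfl | rfl <;> rcases hl with rfl | rfl <;> simp only [phiFGM] <;> norm_num
  · rw [integral_Icc_zero_one_of_eq_quartic 0 0 12 (-12) 3
      fun x => by linear_combination (4 * x ^ 2 - 4 * x + 1) * h3]
    norm_num
  · rw [integral_Icc_zero_one_of_eq_quartic 0 (12 * (√3 * √5)) (-18 * (√3 * √5))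
      (8 * (√3 * √5)) (-(√3 * √5)) fun x => by ring]
    ring
  · rw [integral_Icc_zero_one_of_eq_quartic 0 (12 * (√3 * √5)) (-18 * (√3 * √5))
      (8 * (√3 * √5)) (-(√3 * √5)) fun x => by ring]
    ring
  · rw [integral_Icc_zero_one_of_eq_quartic 180 (-360) 240 (-60) 5
      fun x => by linear_combination (36 * x ^ 4 - 72 * x ^ 3 + 48 * x ^ 2 - 12 * x + 1) * h5]
    norm_num

theorem abs_phiFGM_one_le {x : ℝ} (hx : x ∈ Set.Icc (0:ℝ) 1) : |phiFGM 1 x| ≤ √3 := by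
  have h : |2 * x - 1| ≤ 1 := abs_le.2 ⟨by linarith [hx.1], by linarith [hx.2]⟩
  simp only [phiFGM, if_true, abs_mul, abs_of_nonneg (Real.sqrt_nonneg 3)]
  exact mul_le_of_le_one_right (Real.sqrt_nonneg 3) h

theorem abs_phiFGM_two_le {x : ℝ} (hx : x ∈ Set.Icc (0:ℝ) 1) : |phiFGM 2 x| ≤ √5 := by
  have h : |6 * x ^ 2 - 6 * x + 1| ≤ 1 :=
    abs_le.2 ⟨by nlinarith [hx.1, hx.2], by nlinarith [hx.1, hx.2]⟩
  simp only [phiFGM, OfNat.ofNat_ne_one, if_false, abs_mul, abs_of_nonneg (Real.sqrt_nonneg 5)]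
  exact mul_le_of_le_one_right (Real.sqrt_nonneg 5) h

theorem integral_prod_mul_prod_pi {ι α : Type*} [Fintype ι] [DecidableEq ι] [MeasurableSpace α]
    {μ : Measure α} [IsProbabilityMeasure μ] {g h : α → ℝ}
    (hg : ∫ x, g x ∂μ = 0) (hh : ∫ x, h x ∂μ = 0) (M P : Finset ι) :
    ∫ u, (∏ m ∈ M, g (u m)) * ∏ s ∈ P, h (u s) ∂(Measure.pi fun _ => μ) =
      if M = P then (∫ x, g x * h x ∂μ) ^ P.card else 0 := by
  set F : ι → α → ℝ := fun i x => (if i ∈ M then g x else 1) * (if i ∈ P then h x else 1)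
  have hF : ∀ u : ι → α, (∏ m ∈ M, g (u m)) * ∏ s ∈ P, h (u s) = ∏ i, F i (u i) := fun u => by
    simp only [F, prod_mul_distrib, Fintype.prod_ite_mem]
  have hfactor : ∀ i, ∫ x, F i x ∂μ =
      if i ∈ M ∧ i ∈ P then ∫ x, g x * h x ∂μ else if i ∈ M ∨ i ∈ P then 0 else 1 := fun i => by
    by_cases hM : i ∈ M <;> by_cases hP : i ∈ P <;> simp [F, hM, hP, hg, hh]
  simp_rw [hF, integral_fintype_prod_eq_prod, hfactor]
  split_ifs with hMP
  · subst hMP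
    calc _ = ∏ i, if i ∈ M then ∫ x, g x * h x ∂μ else 1 :=
          Fintype.prod_congr _ _ fun i => by by_cases hi : i ∈ M <;> simp [hi]
      _ = _ := by rw [Fintype.prod_ite_mem, prod_const]
  · obtain ⟨i, hi⟩ : ∃ i, ¬(i ∈ M ↔ i ∈ P) := by
      by_contra! hiff; exact hMP (ext hiff)
    exact prod_eq_zero (mem_univ i) (by rw [if_neg (by tauto), if_pos (by tauto)])

theorem abs_prod_le_pow_card {ι : Type*} {f : ι → ℝ} {C : ℝ} (s : Finset ι)
    (hf : ∀ i ∈ s, |f i| ≤ C) : |∏ i ∈ s, f i| ≤ C ^ s.card := by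
  rw [abs_prod, ← prod_const]
  exact prod_le_prod (fun _ _ => abs_nonneg _) hf

theorem fgmDensity_nonneg {d : ℕ} {lam : ℕ → Finset (Fin d) → ℝ} (hlam : fgmAdmissible d lam)
    {u : Fin d → ℝ} (hu : ∀ i, u i ∈ Set.Icc (0:ℝ) 1) : 0 ≤ fgmDensity d lam u := by
  set S := univ.powerset.filter (fun M : Finset (Fin d) => 2 ≤ M.card)
  have hbound : |∑ k ∈ Icc 1 2, ∑ M ∈ S, lam k M * ∏ m ∈ M, phiFGM k (u m)| ≤ 1 :=
    calc _ = |∑ M ∈ S, (lam 1 M * ∏ m ∈ M, phiFGM 1 (u m) +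
              lam 2 M * ∏ m ∈ M, phiFGM 2 (u m))| := by
          rw [show Icc 1 2 = {1, 2} from rfl, sum_pair (by norm_num), sum_add_distrib]
      _ ≤ ∑ M ∈ S, (√3 ^ M.card * |lam 1 M| + √5 ^ M.card * |lam 2 M|) := by
          refine (abs_sum_le_sum_abs _ _).trans (sum_le_sum fun M _ => ?_)
          refine (abs_add_le _ _).trans ?_
          rw [abs_mul, abs_mul, mul_comm |lam 1 M|, mul_comm |lam 2 M|]
          gcongr
          · exact abs_prod_le_pow_card M fun m _ => abs_phiFGM_one_le (hu m)
          · exact abs_prod_le_pow_card M fun m _ => abs_phiFGM_two_le (hu m)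
      _ ≤ 1 := hlam
  rw [fgmDensity]
  linarith [neg_abs_le (∑ k ∈ Icc 1 2, ∑ M ∈ S, lam k M * ∏ m ∈ M, phiFGM k (u m))]

theorem integral_fgmMeasure_eq_integral_fgmDensity_mul {d : ℕ} {lam : ℕ → Finset (Fin d) → ℝ}
    (hlam : fgmAdmissible d lam) (f : (Fin d → ℝ) → ℝ) :
    ∫ u, f u ∂fgmMeasure d lam = ∫ u, fgmDensity d lam u * f u
      ∂(Measure.pi fun _ : Fin d => volume.restrict (Set.Icc (0:ℝ) 1)) := by
  have hc : Continuous (fgmDensity d lam) := by unfold fgmDensity; fun_prop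
  rw [fgmMeasure, integral_withDensity_eq_integral_toReal_smul
    hc.measurable.ennreal_ofReal (ae_of_all _ fun _ => ENNReal.ofReal_lt_top)]
  refine integral_congr_ae ?_
  filter_upwards [ae_mem_Icc_pi_volume_restrict_Icc 0 1] with u hu
  rw [ENNReal.toReal_ofReal (fgmDensity_nonneg hlam hu), smul_eq_mul]

theorem integral_fgmMeasure {d : ℕ} {lam : ℕ → Finset (Fin d) → ℝ}
    (hlam : fgmAdmissible d lam) {f : (Fin d → ℝ) → ℝ} (hf : Continuous f) :
    ∫ u, f u ∂fgmMeasure d lam =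
      ∫ u, f u ∂(Measure.pi fun _ : Fin d => volume.restrict (Set.Icc (0:ℝ) 1)) +
        ∑ k ∈ Icc 1 2,
          ∑ M ∈ univ.powerset.filter (fun M : Finset (Fin d) => 2 ≤ M.card),
            lam k M * ∫ u, (∏ m ∈ M, phiFGM k (u m)) * f u
              ∂(Measure.pi fun _ : Fin d => volume.restrict (Set.Icc (0:ℝ) 1)) := by
  have hint : ∀ k M, Integrable (fun u : Fin d → ℝ => lam k M * ((∏ m ∈ M, phiFGM k (u m)) * f u))
      (Measure.pi fun _ : Fin d => volume.restrict (Set.Icc (0:ℝ) 1)) :=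
    fun k M => integrable_pi_volume_restrict_Icc (by fun_prop)
  simp_rw [integral_fgmMeasure_eq_integral_fgmDensity_mul hlam, fgmDensity, add_mul, one_mul,
    sum_mul, mul_assoc]
  rw [integral_add (integrable_pi_volume_restrict_Icc hf)
      (integrable_finsetSum _ fun k _ => integrable_finsetSum _ fun M _ => hint k M),
    integral_finsetSum _ fun k _ => integrable_finsetSum _ fun M _ => hint k M]
  simp_rw [integral_finsetSum _ fun M _ => hint _ M, integral_const_mul]

theorem stmt_6_general (d : ℕ) (lam : ℕ → Finset (Fin d) → ℝ)
    (hlam : fgmAdmissible d lam) (z : ℕ) (hz : z ∈ ({1, 2} : Set ℕ))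
    (P : Finset (Fin d)) (hP : 2 ≤ P.card) :
    ∫ u, (∏ s ∈ P, phiFGM z (u s)) ∂(fgmMeasure d lam) = lam z P := by
  have hPne : P.Nonempty := card_pos.1 (by omega)
  have hPS : P ∈ univ.powerset.filter (fun M : Finset (Fin d) => 2 ≤ M.card) :=
    mem_filter.2 ⟨mem_powerset.2 (subset_univ P), hP⟩
  have hmean : ∫ u, ∏ s ∈ P, phiFGM z (u s)
      ∂(Measure.pi fun _ : Fin d => volume.restrict (Set.Icc (0:ℝ) 1)) = 0 := by
    simpa [hPne.ne_empty.symm] using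
      integral_prod_mul_prod_pi (integral_phiFGM z) (integral_phiFGM z) ∅ P
  rw [integral_fgmMeasure hlam (by fun_prop), hmean, zero_add]
  simp_rw [integral_prod_mul_prod_pi (integral_phiFGM _) (integral_phiFGM z), mul_ite, mul_zero,
    sum_ite_eq', if_pos hPS]
  rw [show Icc 1 2 = {1, 2} from rfl, sum_pair (by norm_num)]
  rcases hz with rfl | rfl <;> simp [integral_phiFGM_mul_phiFGM, hPne.card_pos.ne']

theorem stmt_6 (d : ℕ) (hd : 2 ≤ d) (lam : ℕ → Finset (Fin d) → ℝ)
    (hlam : fgmAdmissible d lam) (z : ℕ) (hz : z ∈ ({1, 2} : Set ℕ))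
    (P : Finset (Fin d)) (hP : 2 ≤ P.card) :
    ∫ u, (∏ s ∈ P, phiFGM z (u s)) ∂(fgmMeasure d lam) = lam z P :=
  stmt_6_general d lam hlam z hz P hP
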